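/- Inequality for the Fisher information: let d ≥ 2 and let p satisfy 2 < p ≤ (2d² + 1)/(d−1)². Then for every smooth (C^∞) function f on [−1,1] with f > 0 on [−1,1], ∫_{−1}^{1} (L f)² dν_d + (p − 1) ∫_{−1}^{1} ( |f'|²/f ) ν · (L f) dν_d ≥ d ∫_{−1}^{1} |f'|² ν dν_d, where L f = ν f'' − d x f'. -/

import Mathlib

set_option maxHeartbeats 1000000
open MeasureTheory Real
open scoped ENNReal NNReal

noncomputable section

/-- The normalization constant `Z_d = √π Γ(d/2)/Γ((d+1)/2)`. -/
def Zd (d : ℕ) : ℝ := Real.sqrt π * Real.Gamma ((d : ℝ) / 2) / Real.Gamma (((d : ℝ) + 1) / 2)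

/-- The probability measure `dν_d(x) = Z_d⁻¹ (1 − x²)^{d/2−1} dx` on `(−1,1)`. -/
def nuMeas (d : ℕ) : Measure ℝ :=
  (volume.restrict (Set.Ioo (-1 : ℝ) 1)).withDensity
    fun x => ENNReal.ofReal ((1 - x ^ 2) ^ ((d : ℝ) / 2 - 1) / Zd d)

lemma Zd_pos (d : ℕ) (hd : 1 ≤ d) : 0 < Zd d := by
  have h1 : 0 < Real.Gamma ((d : ℝ) / 2) :=
    Real.Gamma_pos_of_pos (by positivity)
  have h2 : 0 < Real.Gamma (((d : ℝ) + 1) / 2) :=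
    Real.Gamma_pos_of_pos (by positivity)
  have := Real.pi_pos
  unfold Zd; positivity

lemma nu_integral (d : ℕ) (hd : 2 ≤ d) (G : ℝ → ℝ) :
    ∫ x, G x ∂(nuMeas d) =
      (Zd d)⁻¹ * ∫ x in (-1:ℝ)..1, G x * (1 - x ^ 2) ^ ((d : ℝ) / 2 - 1) := by
  have hmeas : Measurable fun x : ℝ => ((1 - x ^ 2) ^ ((d : ℝ) / 2 - 1) / Zd d).toNNReal := by
    apply Measurable.real_toNNReal
    have hc : Continuous fun x : ℝ => (1 - x ^ 2) ^ ((d : ℝ) / 2 - 1) := by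
      apply (Real.continuous_rpow_const _).comp (by continuity)
      have : (2:ℝ) ≤ d := by exact_mod_cast hd
      linarith
    exact (hc.measurable).div_const _
  have : nuMeas d = (volume.restrict (Set.Ioo (-1 : ℝ) 1)).withDensity
      fun x => (((1 - x ^ 2) ^ ((d : ℝ) / 2 - 1) / Zd d).toNNReal : ℝ≥0∞) := rfl
  rw [this, integral_withDensity_eq_integral_smul hmeas]
  rw [intervalIntegral.integral_of_le (by norm_num : (-1:ℝ) ≤ 1), integral_Ioc_eq_integral_Ioo,
    ← integral_const_mul]
  apply setIntegral_congr_fun measurableSet_Ioo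
  intro x hx
  have hb : (0:ℝ) ≤ 1 - x ^ 2 := by nlinarith [hx.1, hx.2]
  have hw : (0:ℝ) ≤ (1 - x ^ 2) ^ ((d : ℝ) / 2 - 1) := Real.rpow_nonneg hb _
  simp only [NNReal.smul_def, smul_eq_mul]
  have hZ : (0:ℝ) < Zd d := Zd_pos d (by omega)
  rw [Real.coe_toNNReal _ (div_nonneg hw hZ.le)]
  rw [div_eq_inv_mul]; ring

lemma key (d : ℕ) (hd : 2 ≤ d) (p : ℝ) (hp1 : 2 < p)
    (hp2 : p ≤ (2 * (d : ℝ) ^ 2 + 1) / ((d : ℝ) - 1) ^ 2)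
    (f g h : ℝ → ℝ)
    (hfc : ContinuousOn f (Set.Icc (-1:ℝ) 1))
    (hgc : ContinuousOn g (Set.Icc (-1:ℝ) 1))
    (hhc : ContinuousOn h (Set.Icc (-1:ℝ) 1))
    (hfg : ∀ x ∈ Set.Ioo (-1:ℝ) 1, HasDerivAt f (g x) x)
    (hgh : ∀ x ∈ Set.Ioo (-1:ℝ) 1, HasDerivAt g (h x) x)
    (hfpos : ∀ x ∈ Set.Icc (-1:ℝ) 1, 0 < f x) :
    0 ≤ ∫ x in (-1:ℝ)..1,
      (((1 - x ^ 2) * h x - (d : ℝ) * x * g x) ^ 2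
        + (p - 1) * ((g x ^ 2 / f x) * (1 - x ^ 2) * ((1 - x ^ 2) * h x - (d : ℝ) * x * g x))
        - (d : ℝ) * (g x ^ 2 * (1 - x ^ 2))) * (1 - x ^ 2) ^ ((d : ℝ) / 2 - 1) := by
  have hd2 : (2:ℝ) ≤ (d:ℝ) := by exact_mod_cast hd
  have hIcc : Set.uIcc (-1:ℝ) 1 = Set.Icc (-1:ℝ) 1 := Set.uIcc_of_le (by norm_num)
  -- constants
  set lam : ℝ := (p - 1) * ((d:ℝ) - 1) / ((d:ℝ) + 2) with hlam
  set mu : ℝ := (p - 1) * (d:ℝ) / ((d:ℝ) + 2) - lam ^ 2 with hmu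
  set c : ℝ := (p - 1) * (d:ℝ) / ((d:ℝ) + 2) with hc
  have hd2pos : (0:ℝ) < (d:ℝ) + 2 := by linarith
  have hmu0 : 0 ≤ mu := by
    have hden : (0:ℝ) < ((d:ℝ) - 1) ^ 2 := by nlinarith
    have hkey : (p - 1) * ((d:ℝ) - 1) ^ 2 ≤ (d:ℝ) * ((d:ℝ) + 2) := by
      have h2' : p * ((d:ℝ) - 1) ^ 2 ≤ 2 * (d:ℝ) ^ 2 + 1 := (le_div_iff₀ hden).mp hp2
      nlinarith
    have : mu = (p - 1) * ((d:ℝ) * ((d:ℝ) + 2) - (p - 1) * ((d:ℝ) - 1) ^ 2) / ((d:ℝ) + 2) ^ 2 := by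
      rw [hmu, hc, hlam]; field_simp
    rw [this]
    apply div_nonneg _ (by positivity)
    apply mul_nonneg (by linarith) (by linarith)
  -- functions
  set W : ℝ → ℝ := fun x => (1 - x ^ 2) ^ ((d : ℝ) / 2 - 1) with hW
  set BIG : ℝ → ℝ := fun x =>
      (((1 - x ^ 2) * h x - (d : ℝ) * x * g x) ^ 2
        + (p - 1) * ((g x ^ 2 / f x) * (1 - x ^ 2) * ((1 - x ^ 2) * h x - (d : ℝ) * x * g x))
        - (d : ℝ) * (g x ^ 2 * (1 - x ^ 2))) with hBIG
  set R : ℝ → ℝ := fun x =>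
      (1 - x ^ 2) ^ 2 * W x * ((h x - lam * (g x ^ 2 / f x)) ^ 2 + mu * (g x ^ 2 / f x) ^ 2)
    with hR
  set Φ : ℝ → ℝ := fun x =>
      -(d:ℝ) * x * (1 - x ^ 2) ^ ((d : ℝ) / 2) * g x ^ 2
        + c * (1 - x ^ 2) ^ ((d : ℝ) / 2 + 1) * g x ^ 3 / f x with hΦ
  -- continuity facts
  have hbase : ContinuousOn (fun x : ℝ => 1 - x ^ 2) (Set.Icc (-1:ℝ) 1) := by fun_prop
  have hWc : ContinuousOn W (Set.Icc (-1:ℝ) 1) :=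
    hbase.rpow_const (fun x _ => Or.inr (by linarith))
  have hPc : ContinuousOn (fun x : ℝ => (1 - x ^ 2) ^ ((d : ℝ) / 2)) (Set.Icc (-1:ℝ) 1) :=
    hbase.rpow_const (fun x _ => Or.inr (by linarith))
  have hQc : ContinuousOn (fun x : ℝ => (1 - x ^ 2) ^ ((d : ℝ) / 2 + 1)) (Set.Icc (-1:ℝ) 1) :=
    hbase.rpow_const (fun x _ => Or.inr (by linarith))
  have hfne : ∀ x ∈ Set.Icc (-1:ℝ) 1, f x ≠ 0 := fun x hx => (hfpos x hx).ne'
  have hBIGWc : ContinuousOn (fun x => BIG x * W x) (Set.Icc (-1:ℝ) 1) := by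
    apply ContinuousOn.mul _ hWc
    rw [hBIG]
    apply ContinuousOn.sub
    apply ContinuousOn.add
    · exact ((hbase.mul hhc).sub ((continuous_const.mul continuous_id).continuousOn.mul hgc)).pow 2
    · exact continuousOn_const.mul ((((hgc.pow 2).div hfc hfne).mul hbase).mul
        ((hbase.mul hhc).sub ((continuous_const.mul continuous_id).continuousOn.mul hgc)))
    · exact continuousOn_const.mul ((hgc.pow 2).mul hbase)
  have hRc : ContinuousOn R (Set.Icc (-1:ℝ) 1) := by
    rw [hR]
    apply ContinuousOn.mul ((hbase.pow 2).mul hWc)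
    apply ContinuousOn.add
    · exact (hhc.sub (continuousOn_const.mul ((hgc.pow 2).div hfc hfne))).pow 2
    · exact continuousOn_const.mul (((hgc.pow 2).div hfc hfne).pow 2)
  have hΦc : ContinuousOn Φ (Set.Icc (-1:ℝ) 1) := by
    rw [hΦ]
    apply ContinuousOn.add
    · exact ((continuous_const.mul continuous_id).continuousOn.mul hPc).mul (hgc.pow 2)
    · exact ((continuousOn_const.mul hQc).mul (hgc.pow 3)).div hfc hfne
  -- derivative of Φ
  have hΦderiv : ∀ x ∈ Set.Ioo (-1:ℝ) 1, HasDerivAt Φ (BIG x * W x - R x) x := by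
    intro x hx
    have hxIcc : x ∈ Set.Icc (-1:ℝ) 1 := Set.mem_Icc_of_Ioo hx
    have hνpos : (0:ℝ) < 1 - x ^ 2 := by nlinarith [hx.1, hx.2]
    have hνne : (1:ℝ) - x ^ 2 ≠ 0 := hνpos.ne'
    have hfx : f x ≠ 0 := hfne x hxIcc
    have hν : HasDerivAt (fun y : ℝ => 1 - y ^ 2) (-(2 * x)) x := by
      simpa using ((hasDerivAt_pow 2 x).const_sub 1)
    have hP : HasDerivAt (fun y : ℝ => (1 - y ^ 2) ^ ((d : ℝ) / 2))
        (-(2 * x) * ((d:ℝ)/2) * (1 - x ^ 2) ^ ((d : ℝ) / 2 - 1)) x :=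
      hν.rpow_const (Or.inl hνne)
    have hQ : HasDerivAt (fun y : ℝ => (1 - y ^ 2) ^ ((d : ℝ) / 2 + 1))
        (-(2 * x) * ((d:ℝ)/2 + 1) * (1 - x ^ 2) ^ ((d : ℝ) / 2 + 1 - 1)) x :=
      hν.rpow_const (Or.inl hνne)
    have hf' := hfg x hx
    have hg' := hgh x hx
    have e1 : (1 - x ^ 2) ^ ((d : ℝ) / 2) = (1 - x ^ 2) ^ ((d : ℝ) / 2 - 1) * (1 - x ^ 2) := by
      rw [← Real.rpow_add_one hνne]; congr 1; ring
    have e2 : (1 - x ^ 2) ^ ((d : ℝ) / 2 + 1)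
        = (1 - x ^ 2) ^ ((d : ℝ) / 2 - 1) * (1 - x ^ 2) * (1 - x ^ 2) := by
      rw [← Real.rpow_add_one hνne, ← Real.rpow_add_one hνne]; congr 1; ring
    have e3 : (1 - x ^ 2) ^ ((d : ℝ) / 2 + 1 - 1)
        = (1 - x ^ 2) ^ ((d : ℝ) / 2 - 1) * (1 - x ^ 2) := by
      rw [← Real.rpow_add_one hνne]; congr 1; ring
    have h1 : HasDerivAt (fun y : ℝ => -(d:ℝ) * y * (1 - y ^ 2) ^ ((d : ℝ) / 2))
        (-(d:ℝ) * (1 - x ^ 2) ^ ((d : ℝ) / 2)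
          + -(d:ℝ) * x * (-(2 * x) * ((d:ℝ)/2) * (1 - x ^ 2) ^ ((d : ℝ) / 2 - 1))) x := by
      have hlin : HasDerivAt (fun y : ℝ => -(d:ℝ) * y) (-(d:ℝ)) x := by
        simpa using (hasDerivAt_id x).const_mul (-(d:ℝ))
      exact hlin.mul hP
    have h2 : HasDerivAt (fun y : ℝ => c * (1 - y ^ 2) ^ ((d : ℝ) / 2 + 1) * g y ^ 3)
        (c * (-(2 * x) * ((d:ℝ)/2 + 1) * (1 - x ^ 2) ^ ((d : ℝ) / 2 + 1 - 1)) * g x ^ 3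
          + c * (1 - x ^ 2) ^ ((d : ℝ) / 2 + 1) * (3 * g x ^ 2 * h x)) x := by
      exact ((hQ.const_mul c).mul (hg'.pow 3)).congr_deriv (by simp only [Pi.pow_apply]; push_cast; ring)
    have hsum := (h1.mul (hg'.pow 2)).add (h2.div hf' hfx)
    rw [hΦ]
    refine hsum.congr_deriv ?_
    symm
    simp only [hBIG, hR, hW, hmu, hc, hlam, e1, e2, e3, Pi.pow_apply]
    norm_num
    field_simp
    ring
  -- FTC
  have hφint : IntervalIntegrable (fun x => BIG x * W x - R x) volume (-1:ℝ) 1 :=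
    ContinuousOn.intervalIntegrable (by rw [hIcc]; exact hBIGWc.sub hRc)
  have hRint : IntervalIntegrable R volume (-1:ℝ) 1 :=
    ContinuousOn.intervalIntegrable (by rw [hIcc]; exact hRc)
  have hFTC : ∫ x in (-1:ℝ)..1, (BIG x * W x - R x) = Φ 1 - Φ (-1) := by
    apply intervalIntegral.integral_eq_sub_of_hasDeriv_right_of_le (by norm_num) hΦc
      (fun x hx => (hΦderiv x hx).hasDerivWithinAt) hφint
  have hΦ1 : Φ 1 = 0 := by
    rw [hΦ]; norm_num
    rw [Real.zero_rpow (by positivity), Real.zero_rpow (by positivity)]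
    ring
  have hΦm1 : Φ (-1) = 0 := by
    rw [hΦ]; norm_num
    rw [Real.zero_rpow (by positivity), Real.zero_rpow (by positivity)]
    ring
  have hsplit : ∫ x in (-1:ℝ)..1, BIG x * W x
      = (∫ x in (-1:ℝ)..1, (BIG x * W x - R x)) + ∫ x in (-1:ℝ)..1, R x := by
    rw [← intervalIntegral.integral_add hφint hRint]
    congr 1; funext x; ring
  have hRnonneg : 0 ≤ ∫ x in (-1:ℝ)..1, R x := by
    apply intervalIntegral.integral_nonneg (by norm_num)
    intro x hx
    rw [hR, hW]
    have hb : (0:ℝ) ≤ 1 - x ^ 2 := by nlinarith [hx.1, hx.2]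
    have : (0:ℝ) ≤ (1 - x ^ 2) ^ ((d : ℝ) / 2 - 1) := Real.rpow_nonneg hb _
    positivity
  calc (0:ℝ) ≤ 0 + ∫ x in (-1:ℝ)..1, R x := by linarith
    _ = ∫ x in (-1:ℝ)..1, BIG x * W x := by rw [hsplit, hFTC, hΦ1, hΦm1]; ring
    _ = _ := by rw [hBIG, hW]

theorem fisher_information_inequality (d : ℕ) (hd : 2 ≤ d) (p : ℝ) (hp1 : 2 < p)
    (hp2 : p ≤ (2 * (d : ℝ) ^ 2 + 1) / ((d : ℝ) - 1) ^ 2)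
    (f : ℝ → ℝ) (hf : ContDiffOn ℝ (⊤ : ℕ∞) f (Set.Icc (-1 : ℝ) 1))
    (hfpos : ∀ x ∈ Set.Icc (-1 : ℝ) 1, 0 < f x) :
    (∫ x, ((1 - x ^ 2) * deriv (deriv f) x - (d : ℝ) * x * deriv f x) ^ 2 ∂(nuMeas d)) +
        (p - 1) * ∫ x, ((deriv f x) ^ 2 / f x) * (1 - x ^ 2) *
          ((1 - x ^ 2) * deriv (deriv f) x - (d : ℝ) * x * deriv f x) ∂(nuMeas d) ≥
      (d : ℝ) * ∫ x, (deriv f x) ^ 2 * (1 - x ^ 2) ∂(nuMeas d) := by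
  have hUD : UniqueDiffOn ℝ (Set.Icc (-1:ℝ) 1) := uniqueDiffOn_Icc (by norm_num)
  set g : ℝ → ℝ := derivWithin f (Set.Icc (-1:ℝ) 1) with hgdef
  set h : ℝ → ℝ := derivWithin g (Set.Icc (-1:ℝ) 1) with hhdef
  have hg_cd : ContDiffOn ℝ (⊤ : ℕ∞) g (Set.Icc (-1:ℝ) 1) := hf.derivWithin hUD (by simp)
  have hfc : ContinuousOn f (Set.Icc (-1:ℝ) 1) := hf.continuousOn
  have hgc : ContinuousOn g (Set.Icc (-1:ℝ) 1) := hg_cd.continuousOn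
  have hh_cd : ContDiffOn ℝ (⊤ : ℕ∞) h (Set.Icc (-1:ℝ) 1) := hg_cd.derivWithin hUD (by simp)
  have hhc : ContinuousOn h (Set.Icc (-1:ℝ) 1) := hh_cd.continuousOn
  have hmem : ∀ x ∈ Set.Ioo (-1:ℝ) 1, Set.Icc (-1:ℝ) 1 ∈ nhds x := fun x hx =>
    Icc_mem_nhds hx.1 hx.2
  have hfg : ∀ x ∈ Set.Ioo (-1:ℝ) 1, HasDerivAt f (g x) x := fun x hx =>
    (((hf.differentiableOn (by simp)) x (Set.mem_Icc_of_Ioo hx)).hasDerivWithinAt).hasDerivAt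
      (hmem x hx)
  have hgh : ∀ x ∈ Set.Ioo (-1:ℝ) 1, HasDerivAt g (h x) x := fun x hx =>
    (((hg_cd.differentiableOn (by simp)) x (Set.mem_Icc_of_Ioo hx)).hasDerivWithinAt).hasDerivAt
      (hmem x hx)
  -- deriv f = g and deriv (deriv f) = h on Ioo
  have hd1 : ∀ x ∈ Set.Ioo (-1:ℝ) 1, deriv f x = g x := fun x hx => (hfg x hx).deriv
  have hd2 : ∀ x ∈ Set.Ioo (-1:ℝ) 1, deriv (deriv f) x = h x := by
    intro x hx
    have heq : deriv f =ᶠ[nhds x] g :=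
      Filter.eventually_of_mem (isOpen_Ioo.mem_nhds hx) hd1
    rw [heq.deriv_eq]
    exact (hgh x hx).deriv
  -- transfer a.e. equality of integrands to nuMeas
  have hac : nuMeas d ≪ volume.restrict (Set.Ioo (-1:ℝ) 1) :=
    withDensity_absolutelyContinuous _ _
  have congr_int : ∀ (F G : ℝ → ℝ), (∀ x ∈ Set.Ioo (-1:ℝ) 1, F x = G x) →
      ∫ x, F x ∂(nuMeas d) = ∫ x, G x ∂(nuMeas d) := by
    intro F G hFG
    apply integral_congr_ae
    have : ∀ᵐ x ∂(volume.restrict (Set.Ioo (-1:ℝ) 1)), F x = G x :=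
      (ae_restrict_iff' measurableSet_Ioo).mpr (Filter.Eventually.of_forall hFG)
    exact hac.ae_le this
  have e1 : ∫ x, ((1 - x ^ 2) * deriv (deriv f) x - (d : ℝ) * x * deriv f x) ^ 2 ∂(nuMeas d)
      = ∫ x, ((1 - x ^ 2) * h x - (d : ℝ) * x * g x) ^ 2 ∂(nuMeas d) := by
    apply congr_int; intro x hx; rw [hd1 x hx, hd2 x hx]
  have e2 : (∫ x, ((deriv f x) ^ 2 / f x) * (1 - x ^ 2) *
        ((1 - x ^ 2) * deriv (deriv f) x - (d : ℝ) * x * deriv f x) ∂(nuMeas d))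
      = ∫ x, (g x ^ 2 / f x) * (1 - x ^ 2) *
        ((1 - x ^ 2) * h x - (d : ℝ) * x * g x) ∂(nuMeas d) := by
    apply congr_int; intro x hx; rw [hd1 x hx, hd2 x hx]
  have e3 : (∫ x, (deriv f x) ^ 2 * (1 - x ^ 2) ∂(nuMeas d))
      = ∫ x, g x ^ 2 * (1 - x ^ 2) ∂(nuMeas d) := by
    apply congr_int; intro x hx; rw [hd1 x hx]
  rw [e1, e2, e3, nu_integral d hd, nu_integral d hd, nu_integral d hd]
  -- interval integrability of the three pieces
  have hIcc : Set.uIcc (-1:ℝ) 1 = Set.Icc (-1:ℝ) 1 := Set.uIcc_of_le (by norm_num)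
  have hd2' : (2:ℝ) ≤ (d:ℝ) := by exact_mod_cast hd
  have hbase : ContinuousOn (fun x : ℝ => 1 - x ^ 2) (Set.Icc (-1:ℝ) 1) := by fun_prop
  have hWc : ContinuousOn (fun x : ℝ => (1 - x ^ 2) ^ ((d : ℝ) / 2 - 1)) (Set.Icc (-1:ℝ) 1) :=
    hbase.rpow_const (fun x _ => Or.inr (by linarith))
  have hfne : ∀ x ∈ Set.Icc (-1:ℝ) 1, f x ≠ 0 := fun x hx => (hfpos x hx).ne'
  have hLc : ContinuousOn (fun x : ℝ => (1 - x ^ 2) * h x - (d : ℝ) * x * g x)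
      (Set.Icc (-1:ℝ) 1) :=
    (hbase.mul hhc).sub ((continuous_const.mul continuous_id).continuousOn.mul hgc)
  have int1 : IntervalIntegrable
      (fun x => ((1 - x ^ 2) * h x - (d : ℝ) * x * g x) ^ 2 * (1 - x ^ 2) ^ ((d : ℝ) / 2 - 1))
      volume (-1:ℝ) 1 :=
    ContinuousOn.intervalIntegrable (by rw [hIcc]; exact (hLc.pow 2).mul hWc)
  have int2 : IntervalIntegrable
      (fun x => (g x ^ 2 / f x) * (1 - x ^ 2) *
        ((1 - x ^ 2) * h x - (d : ℝ) * x * g x) * (1 - x ^ 2) ^ ((d : ℝ) / 2 - 1))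
      volume (-1:ℝ) 1 :=
    ContinuousOn.intervalIntegrable (by
      rw [hIcc]
      exact ((((hgc.pow 2).div hfc hfne).mul hbase).mul hLc).mul hWc)
  have int3 : IntervalIntegrable
      (fun x => g x ^ 2 * (1 - x ^ 2) * (1 - x ^ 2) ^ ((d : ℝ) / 2 - 1))
      volume (-1:ℝ) 1 :=
    ContinuousOn.intervalIntegrable (by rw [hIcc]; exact ((hgc.pow 2).mul hbase).mul hWc)
  have hkey := key d hd p hp1 hp2 f g h hfc hgc hhc hfg hgh hfpos
  have hsplit : ∫ x in (-1:ℝ)..1,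
      (((1 - x ^ 2) * h x - (d : ℝ) * x * g x) ^ 2
        + (p - 1) * ((g x ^ 2 / f x) * (1 - x ^ 2) * ((1 - x ^ 2) * h x - (d : ℝ) * x * g x))
        - (d : ℝ) * (g x ^ 2 * (1 - x ^ 2))) * (1 - x ^ 2) ^ ((d : ℝ) / 2 - 1)
      = (∫ x in (-1:ℝ)..1, ((1 - x ^ 2) * h x - (d : ℝ) * x * g x) ^ 2
            * (1 - x ^ 2) ^ ((d : ℝ) / 2 - 1))
        + (p - 1) * (∫ x in (-1:ℝ)..1, (g x ^ 2 / f x) * (1 - x ^ 2) *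
            ((1 - x ^ 2) * h x - (d : ℝ) * x * g x) * (1 - x ^ 2) ^ ((d : ℝ) / 2 - 1))
        - (d : ℝ) * ∫ x in (-1:ℝ)..1, g x ^ 2 * (1 - x ^ 2)
            * (1 - x ^ 2) ^ ((d : ℝ) / 2 - 1) := by
    rw [← intervalIntegral.integral_const_mul, ← intervalIntegral.integral_const_mul,
      ← intervalIntegral.integral_add int1 (int2.const_mul _),
      ← intervalIntegral.integral_sub (int1.add (int2.const_mul _)) (int3.const_mul _)]
    congr 1; funext x; ring
  rw [hsplit] at hkey
  have hZ : (0:ℝ) < (Zd d)⁻¹ := inv_pos.mpr (Zd_pos d (by omega))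
  rw [ge_iff_le]
  nlinarith [mul_nonneg hZ.le hkey]
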